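/- arXiv:1508.07766 — 3 statements merged into one kernel-verified Lean document; each statement's English description precedes it below -/
import Mathlib

section
/- Let n ≥ 2 and let k : X × X → ℂ be a function on a set X, and let x₁, …, xₙ ∈ X be points such that k(x_j, x_i) = 0 whenever 1 ≤ i ≤ j ≤ n and j − i ≤ n − 2 (in particular k(x_i,x_i) = 0), and such that for every m with 2 ≤ m < n there is no m-tuple of pairwise distinct points among x₁,…,xₙ whose cyclic product of k-values is non-zero. Then the sum over all n-tuples (i₁,…,iₙ) ∈ {1,…,n}ⁿ of k(x_{i₁},x_{i₂}) k(x_{i₂},x_{i₃}) ⋯ k(x_{i_{n-1}},x_{iₙ}) k(x_{iₙ},x_{i₁}) equals n · k(x₁,x₂) k(x₂,x₃) ⋯ k(x_{n-1},xₙ) k(xₙ,x₁). -/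
/-!
Call `a → b` an edge when `k (x a) (x b) ≠ 0`. By the first hypothesis every edge of `Fin n`
goes strictly up, except possibly the wrap-around edge `n - 1 → 0`. A closed walk of length `n`
along edges must therefore use the wrap-around edge; rotated to start at `0`, it climbs strictly up
to `n - 1`, reached first at some time `m`. If `m < n - 1`, this prefix closed by the wrap-around
edge is a cycle of length `m + 1 < n` through strictly increasing indices, whose points are pairwise
distinct (an equal pair would turn an upward edge into a forbidden downward one), contradicting
the second hypothesis. Hence `m = n - 1`: every walk with non-zero weight is one of the `n`
rotations of `0 → 1 → ⋯ → n - 1 → 0`, and they all have the same weight.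
-/

open Function

section

variable {α M : Type*} {n : ℕ}

def cycleProd [CommMonoid M] (f : α → α → M) (y : Fin n → α) : M :=
  ∏ j, f (y j) (y (finRotate n j))

def IsClosedWalk (R : α → α → Prop) (y : Fin n → α) : Prop :=
  ∀ j, R (y j) (y (finRotate n j))

def UpOrWrap (R : Fin (n + 1) → Fin (n + 1) → Prop) : Prop :=
  ∀ a b, R a b → a < b ∨ a = Fin.last n ∧ b = 0

theorem isClosedWalk_comp {R : α → α → Prop} {x : Fin n → α} {i : Fin n → Fin n} :
    IsClosedWalk R (x ∘ i) ↔ IsClosedWalk (fun a b => R (x a) (x b)) i :=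
  Iff.rfl

theorem cycleProd_ne_zero_iff [CommMonoidWithZero M] [Nontrivial M] [NoZeroDivisors M]
    {f : α → α → M} {y : Fin n → α} :
    cycleProd f y ≠ 0 ↔ IsClosedWalk (fun a b => f a b ≠ 0) y := by
  simp [cycleProd, IsClosedWalk, Finset.prod_ne_zero_iff]

theorem cycleProd_comp_add_right [CommMonoid M] (f : α → α → M) (y : Fin (n + 1) → α)
    (c : Fin (n + 1)) : cycleProd f (fun j => y (j + c)) = cycleProd f y := by
  simp only [cycleProd, finRotate_apply, add_right_comm _ (1 : Fin (n + 1)) c]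
  exact Fintype.prod_equiv (Equiv.addRight c) _ _ fun j => rfl

theorem sum_cycleProd_comp_eq_of_forall_ne_zero [CommSemiring M] (f : α → α → M)
    (x : Fin (n + 1) → α)
    (h : ∀ i : Fin (n + 1) → Fin (n + 1), cycleProd f (x ∘ i) ≠ 0 → ∃ c, i = fun j => j + c) :
    ∑ i : Fin (n + 1) → Fin (n + 1), cycleProd f (x ∘ i) = (n + 1 : ℕ) * cycleProd f x := by
  have hinj : Injective fun (c : Fin (n + 1)) (j : Fin (n + 1)) => j + c := fun c c' h => by
    simpa using congrFun h 0
  rw [← Fintype.sum_of_injective _ hinj (fun _ => cycleProd f x) _ ?_ ?_]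
  · simp
  · intro i hi
    by_contra hne
    obtain ⟨c, rfl⟩ := h i hne
    exact hi ⟨c, rfl⟩
  · intro c
    exact (cycleProd_comp_add_right f x c).symm

theorem upOrWrap_of_not_rel {R : Fin (n + 1) → Fin (n + 1) → Prop}
    (h : ∀ a b : Fin (n + 1), a ≤ b → (b : ℕ) - a < n → ¬ R b a) : UpOrWrap R := by
  intro a b hab
  by_cases hlt : a < b
  · exact Or.inl hlt
  have hcorner : ¬ ((a : ℕ) - b < n) := fun hd => h b a (not_lt.1 hlt) hd hab
  right
  constructor <;> ext <;> simp only [Fin.val_last, Fin.val_zero] <;> omega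

theorem Fin.orderSucc_eq_finRotate {i : Fin (n + 1)} (h : i ≠ Fin.last n) :
    Order.succ i = finRotate (n + 1) i := by
  obtain ⟨s, rfl⟩ := Fin.eq_castSucc_of_ne_last h
  ext
  simp

theorem Fin.castLE_finRotate {m : ℕ} (hmn : m < n) {t : Fin (m + 1)} (ht : t ≠ Fin.last m) :
    Fin.castLE (Nat.succ_le_succ hmn.le) (finRotate _ t)
      = finRotate _ (Fin.castLE (Nat.succ_le_succ hmn.le) t) := by
  have ht' : Fin.castLE (Nat.succ_le_succ hmn.le) t ≠ Fin.last n :=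
    Fin.ne_of_lt (show (t : ℕ) < n from (Nat.lt_succ_iff.1 t.isLt).trans_lt hmn)
  ext
  rw [Fin.val_castLE, coe_finRotate_of_ne_last ht, coe_finRotate_of_ne_last ht', Fin.val_castLE]

namespace IsClosedWalk

theorem comp_castLE {R : α → α → Prop} {y : Fin (n + 1) → α} (hy : IsClosedWalk R y) {m : ℕ}
    (hmn : m < n) (hclose : R (y (Fin.castLE (Nat.succ_le_succ hmn.le) (Fin.last m))) (y 0)) :
    IsClosedWalk R (y ∘ Fin.castLE (Nat.succ_le_succ hmn.le)) := by
  intro t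
  rcases eq_or_ne t (Fin.last m) with rfl | ht
  · simpa only [comp_apply, finRotate_last, Fin.castLE_zero] using hclose
  · simpa only [comp_apply, Fin.castLE_finRotate hmn ht] using hy _

theorem eq_id_or_exists_short_of_apply_zero {R : Fin (n + 1) → Fin (n + 1) → Prop}
    {i : Fin (n + 1) → Fin (n + 1)} (hR : UpOrWrap R) (hi : IsClosedWalk R i) (h0 : i 0 = 0) :
    i = id ∨ ∃ m, 0 < m ∧ m < n ∧
      ∃ g : Fin (m + 1) → Fin (n + 1), StrictMono g ∧ IsClosedWalk R g := by
  have hwrap : R (i (Fin.last n)) 0 := by simpa [h0] using hi (Fin.last n)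
  have hlast : i (Fin.last n) = Fin.last n :=
    ((hR _ _ hwrap).resolve_left (Fin.not_lt_zero _)).1
  obtain ⟨m, hmin⟩ := exists_minimal_of_wellFoundedLT (i · = Fin.last n) ⟨_, hlast⟩
  have hmono : StrictMonoOn i (Set.Iic m) := strictMonoOn_Iic_of_lt_succ fun t ht => by
    rw [Fin.orderSucc_eq_finRotate (ht.trans_le (Fin.le_last m)).ne]
    exact (hR _ _ (hi t)).resolve_right fun h => hmin.not_lt h.1 ht
  rcases (Fin.le_last m).eq_or_lt with rfl | hlt
  · exact Or.inl <| StrictMono.eq_id fun a b hab => hmono (Fin.le_last a) (Fin.le_last b) hab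
  · have hmn : (m : ℕ) < n := hlt
    refine Or.inr ⟨m, Nat.pos_of_ne_zero fun hm0 => ?_, hmn, _,
      fun a b hab => hmono (Nat.lt_succ_iff.1 a.isLt) (Nat.lt_succ_iff.1 b.isLt) hab,
      hi.comp_castLE hmn ?_⟩
    · exact hlt.ne (by rw [← hmin.prop, show m = 0 from Fin.ext hm0, h0])
    · show R (i m) (i 0)
      rwa [h0, hmin.prop, ← hlast]

theorem exists_eq_add_or_exists_short {R : Fin (n + 1) → Fin (n + 1) → Prop}
    {i : Fin (n + 1) → Fin (n + 1)} (hR : UpOrWrap R) (hi : IsClosedWalk R i) :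
    (∃ c, i = fun j => j + c) ∨ ∃ m, 0 < m ∧ m < n ∧
      ∃ g : Fin (m + 1) → Fin (n + 1), StrictMono g ∧ IsClosedWalk R g := by
  obtain ⟨j₀, hj₀⟩ := Finite.exists_max i
  have h0 : i (j₀ + 1) = 0 := by
    have hstep := hi j₀
    rw [finRotate_apply] at hstep
    exact ((hR _ _ hstep).resolve_left (not_lt.2 (hj₀ _))).2
  have hi' : IsClosedWalk R fun j => i (j + (j₀ + 1)) := fun j => by
    simpa [add_right_comm] using hi (j + (j₀ + 1))
  refine (hi'.eq_id_or_exists_short_of_apply_zero hR (by simpa using h0)).imp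
    (fun h => ⟨-(j₀ + 1), funext fun j => ?_⟩) id
  rw [← sub_eq_add_neg]
  simpa only [sub_add_cancel, id] using congrFun h (j - (j₀ + 1))

theorem injective_comp_of_strictMono {R : α → α → Prop} {x : Fin (n + 1) → α}
    (hR : UpOrWrap fun a b => R (x a) (x b)) {m : ℕ} {g : Fin (m + 1) → Fin (n + 1)}
    (hg : StrictMono g) (hw : IsClosedWalk (fun a b => R (x a) (x b)) g) :
    Injective (x ∘ g) := by
  suffices h : ∀ s t, s < t → x (g s) ≠ x (g t) by
    intro s t hst
    by_contra hne
    rcases lt_or_gt_of_ne hne with hlt | hlt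
    · exact h s t hlt hst
    · exact h t s hlt hst.symm
  intro s t hst heq
  have hs : s ≠ Fin.last m := (hst.trans_le (Fin.le_last t)).ne
  have hsucc : finRotate _ s ≤ t := by
    rw [Fin.le_def, coe_finRotate_of_ne_last hs]
    exact hst
  have hedge : R (x (g t)) (x (g (finRotate _ s))) := heq ▸ hw s
  rcases hR _ _ hedge with h | h
  · exact not_le.2 h (hg.monotone hsucc)
  · exact Fin.not_lt_zero _ (h.2 ▸ hg ((lt_finRotate_iff_ne_last s).2 hs))

end IsClosedWalk

end

theorem stmt_5 {X : Type*} (n : ℕ) (hn : 2 ≤ n) (k : X → X → ℂ) (x : Fin n → X)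
    (h1 : ∀ i j : Fin n, i ≤ j → (j : ℕ) - (i : ℕ) ≤ n - 2 → k (x j) (x i) = 0)
    (h2 : ∀ m : ℕ, 2 ≤ m → m < n → ∀ y : Fin m → X,
      (∀ a : Fin m, ∃ b : Fin n, y a = x b) → Function.Injective y →
      ∏ a : Fin m, k (y a) (y (finRotate m a)) = 0) :
    ∑ i : Fin n → Fin n, ∏ j : Fin n, k (x (i j)) (x (i (finRotate n j)))
      = n * ∏ j : Fin n, k (x j) (x (finRotate n j)) := by
  obtain ⟨n, rfl⟩ : ∃ n', n = n' + 1 := ⟨n - 1, by omega⟩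
  have hR : UpOrWrap fun a b => k (x a) (x b) ≠ 0 :=
    upOrWrap_of_not_rel fun a b hab hd => not_not.2 (h1 a b hab (by omega))
  refine sum_cycleProd_comp_eq_of_forall_ne_zero k x fun i hi => ?_
  rcases (isClosedWalk_comp.1 (cycleProd_ne_zero_iff.1 hi)).exists_eq_add_or_exists_short hR with
    hrot | ⟨m, hm, hmn, g, hg, hw⟩
  · exact hrot
  · have hinj := hw.injective_comp_of_strictMono (R := (k · · ≠ 0)) hR hg
    exact absurd (h2 (m + 1) (by omega) (by omega) (x ∘ g) (fun a => ⟨g a, rfl⟩) hinj)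
      (cycleProd_ne_zero_iff.2 hw)
end

section
/- Let λ₁, λ₂, λ₃, … be a (finite or infinite) sequence of complex numbers with Σ |λ_j| < ∞ such that Σ λ_jⁿ = 0 for every positive integer n. Then λ_j = 0 for all j. -/
/-!
Divide by a term `l m` of maximal modulus, so that all `u j = l j / l m` lie in the closed unit
disc and the value `1` is attained. The Cesàro means `N⁻¹ ∑_{n=1}^N u^n` tend to `1` at `u = 1`
and to `0` at every other point of the disc (the geometric sums stay bounded), and they are
dominated by `‖u‖`. Dominated convergence for series turns the vanishing power sums into
`#{j | u j = 1} = 0`, which is absurd.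
-/

open Filter Finset Topology

lemma Filter.Tendsto.exists_forall_ge_of_cofinite_nhds_zero {ι : Type*} {f : ι → ℝ}
    (hf : Tendsto f cofinite (𝓝 0)) {i : ι} (hi : 0 < f i) : ∃ j, ∀ k, f k ≤ f j := by
  have hfin : {k | f i ≤ f k}.Finite := by
    simpa only [not_lt] using eventually_cofinite.mp (hf.eventually (gt_mem_nhds hi))
  obtain ⟨j, hij, hj⟩ := Set.exists_max_image _ f hfin ⟨i, le_refl (f i)⟩
  exact ⟨j, fun k => (le_total (f i) (f k)).elim (hj k) fun hki => hki.trans hij⟩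

section CesaroMean

variable {𝕜 : Type*} [RCLike 𝕜]

lemma norm_pow_le_norm_of_norm_le_one {z : 𝕜} (hz : ‖z‖ ≤ 1) {n : ℕ} (hn : n ≠ 0) :
    ‖z ^ n‖ ≤ ‖z‖ := by
  rw [norm_pow]
  exact pow_le_of_le_one (norm_nonneg _) hz hn

def cesaroPowMean (z : 𝕜) (N : ℕ) : 𝕜 := (N : 𝕜)⁻¹ * ∑ n ∈ range N, z ^ (n + 1)

lemma norm_geom_sum_le_of_ne_one {z : 𝕜} (hz : ‖z‖ ≤ 1) (hz1 : z ≠ 1) (N : ℕ) :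
    ‖∑ n ∈ range N, z ^ n‖ ≤ 2 / ‖z - 1‖ := by
  rw [geom_sum_eq hz1, norm_div]
  gcongr
  calc ‖z ^ N - 1‖ ≤ ‖z ^ N‖ + ‖(1 : 𝕜)‖ := norm_sub_le _ _
    _ ≤ 1 + 1 := by
      rw [norm_pow, norm_one]
      gcongr
      exact pow_le_one₀ (norm_nonneg _) hz
    _ = 2 := by norm_num

lemma norm_cesaroPowMean_le {z : 𝕜} (hz : ‖z‖ ≤ 1) (N : ℕ) : ‖cesaroPowMean z N‖ ≤ ‖z‖ := by
  rcases N.eq_zero_or_pos with rfl | hN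
  · simp [cesaroPowMean]
  have hsum : ‖∑ n ∈ range N, z ^ (n + 1)‖ ≤ N * ‖z‖ := by
    refine (norm_sum_le _ _).trans ?_
    simpa using Finset.sum_le_sum (s := range N) fun n _ =>
      norm_pow_le_norm_of_norm_le_one hz n.succ_ne_zero
  rw [cesaroPowMean, norm_mul, norm_inv, RCLike.norm_natCast, inv_mul_le_iff₀ (by positivity)]
  exact hsum

lemma tendsto_cesaroPowMean {z : 𝕜} (hz : ‖z‖ ≤ 1) :
    Tendsto (cesaroPowMean z) atTop (𝓝 (if z = 1 then 1 else 0)) := by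
  split_ifs with hz1
  · refine tendsto_const_nhds.congr' ((eventually_ne_atTop 0).mono fun N hN => ?_)
    simp [cesaroPowMean, hz1, hN]
  · have hbound : ∀ N : ℕ, ‖cesaroPowMean z N‖ ≤ (N : ℝ)⁻¹ * (‖z‖ * (2 / ‖z - 1‖)) := by
      intro N
      simp_rw [cesaroPowMean, pow_succ', ← mul_sum, norm_mul, norm_inv, RCLike.norm_natCast]
      gcongr
      exact norm_geom_sum_le_of_ne_one hz hz1 N
    refine squeeze_zero_norm hbound ?_
    simpa using (tendsto_inv_atTop_nhds_zero_nat (𝕜 := ℝ)).mul_const (‖z‖ * (2 / ‖z - 1‖))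

lemma ne_one_of_tsum_pow_succ_eq_zero {ι : Type*} {u : ι → 𝕜}
    (hsum : Summable (‖u ·‖)) (hle : ∀ j, ‖u j‖ ≤ 1) (h : ∀ n, ∑' j, u j ^ (n + 1) = 0)
    (j : ι) : u j ≠ 1 := by
  intro hj
  have hmean : ∀ N, ∑' k, cesaroPowMean (u k) N = 0 := by
    intro N
    have hpow : ∀ n ∈ range N, Summable (u · ^ (n + 1)) := fun n _ =>
      hsum.of_norm_bounded fun k => norm_pow_le_norm_of_norm_le_one (hle k) n.succ_ne_zero
    simp only [cesaroPowMean, tsum_mul_left, Summable.tsum_finsetSum hpow, h, sum_const_zero,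
      mul_zero]
  have hlim : Tendsto (fun N => ∑' k, cesaroPowMean (u k) N) atTop
      (𝓝 (∑' k, if u k = 1 then (1 : 𝕜) else 0)) :=
    tendsto_tsum_of_dominated_convergence hsum (fun k => tendsto_cesaroPowMean (hle k))
      (Eventually.of_forall fun N k => norm_cesaroPowMean_le (hle k) N)
  have hcount_summable : Summable fun k => if u k = 1 then (1 : ℝ) else 0 :=
    hsum.of_nonneg_of_le (fun k => by split_ifs <;> norm_num) fun k => by
      split_ifs with hk <;> simp [hk]
  have hcount_pos : 0 < ∑' k, if u k = 1 then (1 : ℝ) else 0 :=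
    hcount_summable.tsum_pos (fun k => by split_ifs <;> norm_num) j (by simp [hj])
  have hcount_ne : (∑' k, if u k = 1 then (1 : 𝕜) else 0) ≠ 0 := by
    intro hzero
    refine hcount_pos.ne' ((RCLike.ofReal_eq_zero (K := 𝕜)).mp ?_)
    push_cast [apply_ite (fun x : ℝ => (x : 𝕜))]
    exact hzero
  exact hcount_ne (tendsto_nhds_unique hlim (by simpa only [hmean] using tendsto_const_nhds))

end CesaroMean

theorem stmt_8 (l : ℕ → ℂ) (hsum : Summable fun j => ‖l j‖)
    (h : ∀ n : ℕ, 1 ≤ n → ∑' j, (l j) ^ n = 0) :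
    ∀ j, l j = 0 := by
  intro j
  by_contra hj
  obtain ⟨m, hm⟩ :=
    hsum.tendsto_cofinite_zero.exists_forall_ge_of_cofinite_nhds_zero (norm_pos_iff.2 hj)
  have hm0 : l m ≠ 0 := norm_pos_iff.1 ((norm_pos_iff.2 hj).trans_le (hm j))
  refine ne_one_of_tsum_pow_succ_eq_zero (u := (l · / l m)) ?_ (fun k => ?_) (fun n => ?_) m
    (div_self hm0)
  · simpa only [norm_div] using hsum.div_const ‖l m‖
  · rw [norm_div]; exact div_le_one_of_le₀ (hm k) (norm_nonneg _)
  · simp_rw [div_pow, div_eq_mul_inv, tsum_mul_right, h (n + 1) n.succ_pos, zero_mul]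
end

section
/- Let A be an N × N complex matrix such that for every subset S ⊆ {1, …, N} the compression A_S (the submatrix of A with rows and columns indexed by S), viewed as an operator on ℂ^S, is nilpotent. Then every cyclic product A_{i₁ i₂} A_{i₂ i₃} ⋯ A_{iₙ i₁} over pairwise distinct indices i₁, …, iₙ vanishes. -/
/-!
Take an injective cycle `i` of minimal length whose product `A (i 0) (i 1) ⋯ A (i (n-1)) (i 0)`
is nonzero. Any entry `A (i k) (i l)` with `l ≠ k + 1` is a chord: after rotating the cycle so
that `l = 0`, it closes the shorter cycle `i 0 → ⋯ → i k → i 0`, whose other edges are nonzero,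
so the chord vanishes. Hence the compression of `A` to `{i 0, …, i (n-1)}` is a cyclic shift
with nonzero weights, and its powers have nonzero entries at shifted positions, contradicting
nilpotency.
-/

open Finset Function

theorem Fin.castLE_finRotate_castSucc {m n : ℕ} (h : m + 1 ≤ n + 1) (j : Fin m) :
    Fin.castLE h (finRotate (m + 1) j.castSucc) = finRotate (n + 1) (Fin.castLE h j.castSucc) := by
  have hj : Fin.castLE h j.castSucc ≠ Fin.last n := by
    simp only [ne_eq, Fin.ext_iff, Fin.val_castLE, Fin.val_castSucc, Fin.val_last]; omega
  ext
  rw [coe_finRotate_of_ne_last hj, finRotate_apply, Fin.coeSucc_eq_succ]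
  simp

namespace Matrix

variable {ι R : Type*}

section Nilpotent

variable [Fintype ι] [DecidableEq ι] [Semiring R] [NoZeroDivisors R]

theorem pow_apply_perm_ne_zero {M : Matrix ι ι R} (σ : Equiv.Perm ι)
    (hzero : ∀ x y, y ≠ σ x → M x y = 0) (hne : ∀ x, M x (σ x) ≠ 0) (p : ℕ) (x : ι) :
    (M ^ p) x ((σ ^ p) x) ≠ 0 := by
  have : Nontrivial R := nontrivial_of_ne _ _ (hne x)
  induction p with
  | zero => simp
  | succ p ih =>
    have hσ : (σ ^ (p + 1)) x = σ ((σ ^ p) x) := by rw [pow_succ', Equiv.Perm.mul_apply]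
    rw [pow_succ, mul_apply, sum_eq_single ((σ ^ p) x), hσ]
    · exact mul_ne_zero ih (hne _)
    · intro y _ hy
      rw [hσ, hzero y _ (σ.injective.ne hy.symm), mul_zero]
    · simp

theorem not_isNilpotent_of_perm {M : Matrix ι ι R} [Nonempty ι] (σ : Equiv.Perm ι)
    (hzero : ∀ x y, y ≠ σ x → M x y = 0) (hne : ∀ x, M x (σ x) ≠ 0) : ¬IsNilpotent M := by
  rintro ⟨p, hp⟩
  obtain ⟨x⟩ := ‹Nonempty ι›
  exact pow_apply_perm_ne_zero σ hzero hne p x (by rw [hp, zero_apply])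

end Nilpotent

theorem isNilpotent_submatrix_of_injective [DecidableEq ι] [Semiring R] {A : Matrix ι ι R}
    (hA : ∀ S : Finset ι, IsNilpotent (A.submatrix (fun x : S => (x : ι)) (fun x : S => (x : ι))))
    {κ : Type*} [Fintype κ] [DecidableEq κ] {i : κ → ι} (hi : Injective i) :
    IsNilpotent (A.submatrix i i) := by
  let e : κ ≃ (univ.image i : Finset ι) := Equiv.ofBijective
    (fun k => ⟨i k, mem_image_of_mem i (mem_univ k)⟩)
    ⟨fun a b hab => hi (congrArg Subtype.val hab), by
      rintro ⟨x, hx⟩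
      obtain ⟨k, -, rfl⟩ := mem_image.mp hx
      exact ⟨k, rfl⟩⟩
  exact (hA _).map (reindexRingEquiv R e.symm)

section CycleProd

variable [CommMonoidWithZero R]

def cycleProd (A : Matrix ι ι R) {n : ℕ} (i : Fin n → ι) : R :=
  ∏ j, A (i j) (i (finRotate n j))

theorem cycleProd_comp_add_right (A : Matrix ι ι R) {n : ℕ} (i : Fin (n + 1) → ι)
    (l : Fin (n + 1)) : A.cycleProd (fun j => i (j + l)) = A.cycleProd i := by
  simp only [cycleProd, finRotate_apply, add_right_comm _ (1 : Fin (n + 1)) l]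
  exact Fintype.prod_equiv (Equiv.addRight l) _ _ fun _ => rfl

variable [NoZeroDivisors R] {A : Matrix ι ι R} {n : ℕ}

theorem apply_zero_eq_zero_of_cycleProd_ne_zero
    (hshort : ∀ m < n, ∀ i : Fin (m + 1) → ι, Injective i → A.cycleProd i = 0)
    {i : Fin (n + 1) → ι} (hi : Injective i) (hne : A.cycleProd i ≠ 0)
    {k : Fin (n + 1)} (hk : k ≠ Fin.last n) : A (i k) (i 0) = 0 := by
  have : Nontrivial R := nontrivial_of_ne _ _ hne
  have hsub := hshort k (Fin.val_lt_last hk) (fun j => i (Fin.castLE k.isLt j))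
    (hi.comp (Fin.castLE_injective _))
  rw [cycleProd, Fin.prod_univ_castSucc] at hsub
  have hchord := (mul_eq_zero.mp hsub).resolve_left <| prod_ne_zero_iff.mpr fun j _ => by
    rw [Fin.castLE_finRotate_castSucc]
    exact prod_ne_zero_iff.mp hne _ (mem_univ _)
  rw [finRotate_last, Fin.castLE_zero] at hchord
  exact hchord

theorem apply_eq_zero_of_cycleProd_ne_zero
    (hshort : ∀ m < n, ∀ i : Fin (m + 1) → ι, Injective i → A.cycleProd i = 0)
    {i : Fin (n + 1) → ι} (hi : Injective i) (hne : A.cycleProd i ≠ 0)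
    {k l : Fin (n + 1)} (hkl : l ≠ finRotate (n + 1) k) : A (i k) (i l) = 0 := by
  have hrot : k - l ≠ Fin.last n := by
    intro hlast
    apply hkl
    rw [finRotate_apply, ← sub_add_cancel k l, hlast, add_right_comm, Fin.last_add_one, zero_add]
  simpa using apply_zero_eq_zero_of_cycleProd_ne_zero hshort (i := fun j => i (j + l))
    (hi.comp (add_left_injective l)) (by rwa [cycleProd_comp_add_right]) hrot

end CycleProd

theorem cycleProd_eq_zero_of_forall_isNilpotent [CommSemiring R] [NoZeroDivisors R]
    {A : Matrix ι ι R}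
    (hA : ∀ m (i : Fin m → ι), Injective i → IsNilpotent (A.submatrix i i))
    (n : ℕ) (i : Fin (n + 1) → ι) (hi : Injective i) : A.cycleProd i = 0 := by
  induction n using Nat.strong_induction_on with
  | _ n ih =>
    by_contra hne
    exact not_isNilpotent_of_perm (finRotate (n + 1))
      (fun k l hkl => apply_eq_zero_of_cycleProd_ne_zero ih hi hne hkl)
      (fun k h0 => hne (prod_eq_zero (mem_univ k) h0)) (hA _ i hi)

end Matrix

theorem stmt_13 (N : ℕ) (A : Matrix (Fin N) (Fin N) ℂ)
    (h : ∀ S : Finset (Fin N),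
      IsNilpotent (A.submatrix (fun i : S => (i : Fin N)) (fun i : S => (i : Fin N)))) :
    ∀ n : ℕ, 1 ≤ n → ∀ i : Fin n → Fin N, Function.Injective i →
      ∏ j : Fin n, A (i j) (i (finRotate n j)) = 0 := by
  intro n hn i hi
  obtain ⟨n, rfl⟩ := Nat.exists_eq_add_of_le' hn
  exact Matrix.cycleProd_eq_zero_of_forall_isNilpotent
    (fun _ _ hj => Matrix.isNilpotent_submatrix_of_injective h hj) n i hi
end
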